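/- Let D be a larva with head v (an even hole c_1, ..., c_k, k ≥ 4 even, plus v adjacent exactly to c_1 and c_2). Then v is unwanted in D: v belongs to no strong stable set of D. -/
import Mathlib


open SimpleGraph

section Defs

variable {V : Type*}

/-- A stable (independent) set of a graph. -/
def IsStable (G : SimpleGraph V) (S : Set V) : Prop :=
  ∀ ⦃u v : V⦄, u ∈ S → v ∈ S → ¬ G.Adj u v

/-- `C` is a maximal clique of the induced subgraph `G[W]`. -/
def IsMaxCliqueOn (G : SimpleGraph V) (W C : Set V) : Prop :=
  C ⊆ W ∧ G.IsClique C ∧ ∀ D : Set V, D ⊆ W → G.IsClique D → C ⊆ D → D = C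

/-- `C` is a maximal clique of `G`. -/
def IsMaxClique (G : SimpleGraph V) (C : Set V) : Prop :=
  G.IsClique C ∧ ∀ D : Set V, G.IsClique D → C ⊆ D → D = C

/-- `S` is a strong stable set of the induced subgraph `G[W]`. -/
def StrongStableOn (G : SimpleGraph V) (W S : Set V) : Prop :=
  S ⊆ W ∧ IsStable G S ∧ ∀ C : Set V, IsMaxCliqueOn G W C → C.Nonempty → (S ∩ C).Nonempty

/-- `S` is a strong stable set of `G`. -/
def StrongStable (G : SimpleGraph V) (S : Set V) : Prop :=
  IsStable G S ∧ ∀ C : Set V, IsMaxClique G C → C.Nonempty → (S ∩ C).Nonempty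

/-- The induced subgraph `G[W]` is strongly perfect. -/
def StronglyPerfectOn (G : SimpleGraph V) (W : Set V) : Prop :=
  ∀ U : Set V, U ⊆ W → ∃ S : Set V, StrongStableOn G U S

/-- `G` is strongly perfect: every induced subgraph has a strong stable set. -/
def StronglyPerfect (G : SimpleGraph V) : Prop :=
  ∀ U : Set V, ∃ S : Set V, StrongStableOn G U S

/-- `G` is minimal non-strongly-perfect. -/
def MinimalNSP (G : SimpleGraph V) : Prop :=
  ¬ StronglyPerfect G ∧ ∀ W : Set V, W ≠ Set.univ → StronglyPerfectOn G W

end Defs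

/-- A larva on an even hole `c_0, …, c_{k-1}` (paper's `c_1, …, c_k`) together with a
head `v = none` adjacent exactly to `c_0` and `c_1`. -/
def larvaRel (k : ℕ) : Option (ZMod k) → Option (ZMod k) → Prop
  | some i, some j => j = i + 1
  | none, some i => i = 0 ∨ i = 1
  | _, _ => False

def larva (k : ℕ) : SimpleGraph (Option (ZMod k)) := SimpleGraph.fromRel (larvaRel k)

lemma larva_adj {k : ℕ} {a b : Option (ZMod k)} :
    (larva k).Adj a b ↔ a ≠ b ∧ (larvaRel k a b ∨ larvaRel k b a) := by
  simp [larva]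

lemma natCast_ne_zero_of (k n : ℕ) (h0 : 0 < n) (hn : n < k) : ((n : ℕ) : ZMod k) ≠ 0 := by
  rw [Ne, ZMod.natCast_eq_zero_iff]
  intro h
  exact absurd (Nat.le_of_dvd h0 h) (by omega)

lemma larva_pair_maxclique (k : ℕ) (hk : 4 ≤ k) (i : ZMod k) (hi : i ≠ 0) :
    (larva k).IsClique {some i, some (i + 1)} ∧
      ∀ D : Set (Option (ZMod k)), (larva k).IsClique D → {some i, some (i+1)} ⊆ D →
        D = {some i, some (i+1)} := by
  have h1 : (1 : ZMod k) ≠ 0 := by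
    have := natCast_ne_zero_of k 1 (by omega) (by omega); simpa using this
  have h2 : (2 : ZMod k) ≠ 0 := by
    have := natCast_ne_zero_of k 2 (by omega) (by omega); simpa using this
  have h3 : (3 : ZMod k) ≠ 0 := by
    have := natCast_ne_zero_of k 3 (by omega) (by omega); simpa using this
  have hne : some i ≠ some (i + 1) := by
    intro h
    rw [Option.some_inj] at h
    exact h1 (by linear_combination -h)
  have hadj : (larva k).Adj (some i) (some (i + 1)) := by
    rw [larva_adj]
    exact ⟨hne, Or.inl rfl⟩
  refine ⟨by simpa [SimpleGraph.isClique_pair] using fun _ => hadj, ?_⟩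
  intro D hD hsub
  apply Set.Subset.antisymm _ hsub
  intro w hw
  have hwi : w = some i ∨ (larva k).Adj w (some i) := by
    rcases eq_or_ne w (some i) with h | h
    · exact Or.inl h
    · exact Or.inr (hD hw (hsub (by simp)) h)
  have hwi1 : w = some (i+1) ∨ (larva k).Adj w (some (i+1)) := by
    rcases eq_or_ne w (some (i+1)) with h | h
    · exact Or.inl h
    · exact Or.inr (hD hw (hsub (by simp)) h)
  rcases hwi with h | h
  · simp [h]
  rcases hwi1 with h' | h'
  · simp [h']
  exfalso
  match w with
  | none =>
    rw [larva_adj] at h h'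
    simp only [larvaRel] at h h'
    rcases h.2 with (h0 | h0) | hr
    · exact hi h0
    · rcases h'.2 with (h1' | h1') | hr'
      · exact h2 (by linear_combination h1' - h0)
      · exact hi (by linear_combination h1')
      · exact hr'
    · exact hr
  | some j =>
    rw [larva_adj] at h h'
    simp only [larvaRel] at h h'
    rcases h.2 with hr | hr <;> rcases h'.2 with hr' | hr'
    · -- i = j+1, i+1 = j+1
      exact h1 (by linear_combination hr' - hr)
    · -- i = j+1, j = (i+1)+1
      exact h3 (by linear_combination -hr - hr')
    · -- j = i+1, i+1 = j+1
      exact h1 (by linear_combination -hr - hr')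
    · -- j = i+1, j = i+2
      exact h1 (by linear_combination hr - hr')

theorem larva_head_unwanted (k : ℕ) (hk : 4 ≤ k) (hke : Even k)
    (S : Set (Option (ZMod k))) (hS : StrongStable (larva k) S) :
    none ∉ S := by
  intro hnone
  -- basic facts
  have hcast : ∀ n : ℕ, 1 ≤ n → ((n : ℕ) : ZMod k) = ((n - 1 : ℕ) : ZMod k) + 1 := by
    intro n hn
    conv_lhs => rw [← Nat.sub_add_cancel hn]
    rw [Nat.cast_add, Nat.cast_one]
  have hadj0 : (larva k).Adj none (some ((0 : ℕ) : ZMod k)) := by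
    rw [larva_adj]
    refine ⟨by simp, Or.inl ?_⟩
    simp [larvaRel]
  have hadj1 : (larva k).Adj none (some ((1 : ℕ) : ZMod k)) := by
    rw [larva_adj]
    refine ⟨by simp, Or.inl ?_⟩
    simp [larvaRel]
  have h0S : some ((0 : ℕ) : ZMod k) ∉ S := fun h => hS.1 hnone h hadj0
  have h1S : some ((1 : ℕ) : ZMod k) ∉ S := fun h => hS.1 hnone h hadj1
  -- stability along the cycle
  have hadjc : ∀ n : ℕ, 1 ≤ n →
      (larva k).Adj (some ((n - 1 : ℕ) : ZMod k)) (some ((n : ℕ) : ZMod k)) := by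
    intro n hn
    rw [larva_adj]
    constructor
    · intro h
      rw [Option.some_inj, hcast n hn] at h
      have h1 : (1 : ZMod k) ≠ 0 := by
        have := natCast_ne_zero_of k 1 (by omega) (by omega); simpa using this
      exact h1 (by linear_combination -h)
    · left
      show ((n : ℕ) : ZMod k) = _ + 1
      exact hcast n hn
  -- every consecutive pair with nonzero lower index is hit by S
  have hpair : ∀ n : ℕ, 2 ≤ n → n ≤ k →
      some ((n - 1 : ℕ) : ZMod k) ∈ S ∨ some ((n : ℕ) : ZMod k) ∈ S := by
    intro n h2n hnk
    obtain ⟨hcl, hmax⟩ := larva_pair_maxclique k hk ((n - 1 : ℕ) : ZMod k)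
      (natCast_ne_zero_of k (n - 1) (by omega) (by omega))
    obtain ⟨x, hxS, hxC⟩ := hS.2 _ ⟨hcl, hmax⟩ ⟨some ((n - 1 : ℕ) : ZMod k), by simp⟩
    rw [← hcast n (by omega)] at hxC
    rcases hxC with h | h
    · exact Or.inl (h ▸ hxS)
    · exact Or.inr (h ▸ hxS)
  -- parity claim
  have key : ∀ m : ℕ, 1 ≤ m → m ≤ k - 1 →
      ((Even m → some ((m : ℕ) : ZMod k) ∈ S) ∧ (Odd m → some ((m : ℕ) : ZMod k) ∉ S)) := by
    intro m
    induction m using Nat.strong_induction_on with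
    | _ m ih =>
      intro h1m hmk
      constructor
      · intro hme
        have h2m : 2 ≤ m := by
          rcases Nat.even_iff.mp hme with h; omega
        rcases hpair m h2m (by omega) with h | h
        · exact absurd h (((ih (m - 1) (by omega) (by omega) (by omega)).2
            (by rcases Nat.even_iff.mp hme with h; exact Nat.odd_iff.mpr (by omega))))
        · exact h
      · intro hmo hmem
        rcases eq_or_lt_of_le h1m with h1 | h1
        · exact h1S (by rwa [← h1] at hmem)
        · have h3m : 3 ≤ m := by
            have := Nat.odd_iff.mp hmo; omega
          have hprev : some ((m - 1 : ℕ) : ZMod k) ∈ S :=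
            (ih (m - 1) (by omega) (by omega) (by omega)).1
              (by have := Nat.odd_iff.mp hmo; exact Nat.even_iff.mpr (by omega))
          exact hS.1 hprev hmem (hadjc m (by omega))
  -- final contradiction at the pair {c_{k-1}, c_0}
  rcases hpair k (by omega) le_rfl with h | h
  · exact (key (k - 1) (by omega) le_rfl).2
      (Nat.odd_iff.mpr (by have := Nat.even_iff.mp hke; omega)) h
  · rw [ZMod.natCast_self] at h
    exact h0S (by simpa using h)
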